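/- arXiv:1307.3736 — 9 statements merged into one kernel-verified Lean document; each statement's English description precedes it below -/
import Mathlib

section
/- Let Y_1 > Y_2 > ... > Y_{2n} be 2n distinct nonnegative reals, arising as n pairs, where for each pair exactly one element is labeled 'value' uniformly at random and independently across pairs. Let p_j be the probability that Y_j is among the k largest elements labeled 'value'. Then the expected sum over labeled values selected by a prophet choosing the top k values satisfies: sum_{j=1}^{2n} p_j * Y_j <= (1/2) * sum_{j=1}^{2k} Y_j. -/
/-!
Let `p j` be the probability that `Y j` is selected. Negating every label preserves the uniform
distribution on labellings and swaps whether `Y j` is a value, so `p j ≤ 1/2`; the prophet selects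
at most `k` items, so `∑ p j ≤ k`. Under these two constraints a decreasing sequence `Y` is best
served by weight `1/2` on its `2k` largest terms: with the threshold `c = Y (2k)`, each
`p j * (Y j - c)` is at most `(Y j - c) / 2` when `j < 2k` and at most `0` otherwise.
-/

open Finset Function

theorem sum_mul_le_mul_sum_of_threshold {ι : Type*} [Fintype ι] (s : Finset ι) {p Y : ι → ℝ}
    {q c : ℝ} (hc : 0 ≤ c) (hp0 : ∀ j, 0 ≤ p j) (hpq : ∀ j, p j ≤ q) (hsum : ∑ j, p j ≤ q * #s)
    (hYs : ∀ j ∈ s, c ≤ Y j) (hYsc : ∀ j ∉ s, Y j ≤ c) :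
    ∑ j, p j * Y j ≤ q * ∑ j ∈ s, Y j := by
  classical
  have hterm : ∀ j, p j * (Y j - c) ≤ if j ∈ s then q * (Y j - c) else 0 := by
    intro j
    split_ifs with hj
    · exact mul_le_mul_of_nonneg_right (hpq j) (sub_nonneg.2 (hYs j hj))
    · exact mul_nonpos_of_nonneg_of_nonpos (hp0 j) (sub_nonpos.2 (hYsc j hj))
  calc ∑ j, p j * Y j = ∑ j, p j * (Y j - c) + c * ∑ j, p j := by
        rw [mul_sum, ← sum_add_distrib]; exact sum_congr rfl fun j _ => by ring
    _ ≤ ∑ j ∈ s, q * (Y j - c) + c * (q * #s) := by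
        gcongr
        simpa only [sum_ite_mem, univ_inter] using sum_le_sum fun j (_ : j ∈ univ) => hterm j
    _ = q * ∑ j ∈ s, Y j := by
        simp only [← mul_sum, sum_sub_distrib, sum_const, nsmul_eq_mul]; ring

theorem Fin.sum_mul_le_mul_sum_filter_val_lt {N m : ℕ} (hm : m ≤ N) {p Y : Fin N → ℝ} {q : ℝ}
    (hp0 : ∀ j, 0 ≤ p j) (hpq : ∀ j, p j ≤ q) (hsum : ∑ j, p j ≤ q * m)
    (hY0 : ∀ j, 0 ≤ Y j) (hY : Antitone Y) :
    ∑ j, p j * Y j ≤ q * ∑ j ∈ univ.filter (fun j : Fin N => (j : ℕ) < m), Y j := by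
  have hcard : #(univ.filter fun j : Fin N => (j : ℕ) < m) = m := by
    rw [Fin.card_filter_val_lt, min_eq_right hm]
  rw [← hcard] at hsum
  rcases hm.lt_or_eq with hm | rfl
  · refine sum_mul_le_mul_sum_of_threshold _ (hY0 ⟨m, hm⟩) hp0 hpq hsum ?_ ?_
    · intro j hj
      exact hY (Fin.le_def.2 (mem_filter.1 hj).2.le)
    · intro j hj
      exact hY (Fin.le_def.2 (by simpa using hj))
  · exact sum_mul_le_mul_sum_of_threshold _ le_rfl hp0 hpq hsum (fun j _ => hY0 j)
      fun j hj => by simp at hj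

section Labellings

variable {α : Type*}

theorem two_mul_card_filter_eq_card_of_not_comp_mem {L : Finset (α → Bool)}
    (hL : ∀ ℓ ∈ L, (! ·) ∘ ℓ ∈ L) (j : α) :
    2 * #{ℓ ∈ L | ℓ j = true} = #L := by
  have hswap : #{ℓ ∈ L | ℓ j = true} = #{ℓ ∈ L | ¬ ℓ j = true} :=
    card_nbij' ((! ·) ∘ ·) ((! ·) ∘ ·) (fun ℓ hℓ => by simp_all) (fun ℓ hℓ => by simp_all)
      (fun ℓ _ => by simp [comp_def]) (fun ℓ _ => by simp [comp_def])
  rw [two_mul]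
  nth_rw 2 [hswap]
  exact card_filter_add_card_filter_not _

theorem apply_lt_apply_apply_of_not_lt [LinearOrder α] {σ : α → α} (hσ : Involutive σ)
    (hσ' : ∀ j, σ j ≠ j) {j : α} (hj : ¬ j < σ j) : σ j < σ (σ j) := by
  rw [hσ j]
  exact lt_of_le_of_ne (not_lt.1 hj) (hσ' j)

variable [Fintype α]

def pairedLabellings [DecidableEq α] (σ : α → α) : Finset (α → Bool) :=
  univ.filter fun ℓ => ∀ j, ℓ (σ j) = !(ℓ j)

theorem not_comp_mem_pairedLabellings [DecidableEq α] {σ : α → α} {ℓ : α → Bool}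
    (hℓ : ℓ ∈ pairedLabellings σ) : (! ·) ∘ ℓ ∈ pairedLabellings σ := by
  simp_all [pairedLabellings]

variable [LinearOrder α] {σ : α → α}

theorem two_mul_card_filter_lt_involution (hσ : Involutive σ) (hσ' : ∀ j, σ j ≠ j) :
    2 * #{j | j < σ j} = Fintype.card α := by
  have hswap : #{j | j < σ j} = #{j | ¬ j < σ j} :=
    card_nbij' σ σ (fun j hj => by simpa [hσ j] using (mem_filter.1 hj).2.le)
      (fun j hj => by simpa using apply_lt_apply_apply_of_not_lt hσ hσ' (by simpa using hj))
      (fun j _ => hσ j) (fun j _ => hσ j)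
  rw [two_mul, ← card_univ]
  nth_rw 2 [hswap]
  exact card_filter_add_card_filter_not _

/-- A paired labelling is determined by its values on the smaller element of each pair. -/
theorem card_pairedLabellings_le (hσ : Involutive σ) (hσ' : ∀ j, σ j ≠ j) :
    #(pairedLabellings σ) ≤ 2 ^ #{j | j < σ j} := by
  set S : Finset α := {j | j < σ j}
  have hS : ∀ j, j ∉ S → σ j ∈ S := fun j hj => by
    simpa [S] using apply_lt_apply_apply_of_not_lt hσ hσ' (by simpa [S] using hj)
  calc #(pairedLabellings σ) ≤ #(univ : Finset (S → Bool)) := by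
        refine card_le_card_of_injOn (fun ℓ j => ℓ j) (fun _ _ => mem_univ _) ?_
        intro ℓ₁ h₁ ℓ₂ h₂ h
        have hS_eq : ∀ j ∈ S, ℓ₁ j = ℓ₂ j := fun j hj => congrFun h ⟨j, hj⟩
        funext j
        by_cases hj : j ∈ S
        · exact hS_eq j hj
        · have e₁ := (mem_filter.1 h₁).2 (σ j)
          have e₂ := (mem_filter.1 h₂).2 (σ j)
          rw [hσ j] at e₁ e₂
          rw [e₁, e₂, hS_eq _ (hS j hj)]
    _ = 2 ^ #S := by simp

end Labellings

section Prophet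

variable {α : Type*} [Fintype α] [LinearOrder α]

/-- The items the prophet takes under the labelling `ℓ` (`true` marks a value), when a smaller
index means a larger item. -/
def topValues (k : ℕ) (ℓ : α → Bool) : Finset α :=
  univ.filter fun j => ℓ j = true ∧ #{i | i < j ∧ ℓ i = true} < k

theorem card_topValues_le (k : ℕ) (ℓ : α → Bool) : #(topValues k ℓ) ≤ k := by
  have hrank : StrictMonoOn (fun j => #{i | i < j ∧ ℓ i = true}) {j | ℓ j = true} := by
    intro a ha b _ hab
    refine card_lt_card ⟨fun i hi => ?_, fun h => ?_⟩
    · simp only [mem_filter, mem_univ, true_and] at hi ⊢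
      exact ⟨hi.1.trans hab, hi.2⟩
    · simpa using h (mem_filter.2 ⟨mem_univ a, hab, ha⟩)
  simpa using card_le_card_of_injOn (t := range k) _
    (fun j hj => by simpa using (mem_filter.1 hj).2.2)
    (hrank.injOn.mono fun j hj => (mem_filter.1 hj).2.1)

theorem two_mul_card_filter_mem_topValues_le {L : Finset (α → Bool)}
    (hL : ∀ ℓ ∈ L, (! ·) ∘ ℓ ∈ L) (k : ℕ) (j : α) :
    2 * #{ℓ ∈ L | j ∈ topValues k ℓ} ≤ #L := by
  rw [← two_mul_card_filter_eq_card_of_not_comp_mem hL j]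
  gcongr
  exact fun hℓ => (mem_filter.1 hℓ).2.1

theorem sum_card_filter_mem_topValues_le (k : ℕ) (L : Finset (α → Bool)) :
    ∑ j, #{ℓ ∈ L | j ∈ topValues k ℓ} ≤ #L * k := by
  classical
  calc ∑ j, #{ℓ ∈ L | j ∈ topValues k ℓ} = ∑ ℓ ∈ L, #{j | j ∈ topValues k ℓ} :=
        sum_card_bipartiteAbove_eq_sum_card_bipartiteBelow (fun j ℓ => j ∈ topValues k ℓ)
    _ ≤ ∑ ℓ ∈ L, k := sum_le_sum fun ℓ _ => by simpa using card_topValues_le k ℓ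
    _ = #L * k := by rw [sum_const, smul_eq_mul]

end Prophet

/-- `2*n` distinct nonnegative reals `Y_0 > Y_1 > ...` (indexed so larger
index = smaller value), arising as `n` pairs given by the fixed-point-free involution
`σ`.  A uniformly random labelling `ℓ` (uniform over the set `L` of labellings in which
each pair gets exactly one `value`, i.e. `ℓ (σ j) = !ℓ j`; here `ℓ j = true` means
`Y j` is labelled `value`) determines the prophet's picks: `Y j` is selected iff it is
a value and fewer than `k` larger items are values.  With `p j` the probability that
`Y j` is among the `k` largest values, `∑ j, p j * Y j ≤ (1/2) * ∑_{j < 2k} Y j`. -/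
theorem stmt1 (n k : ℕ) (hk : k ≤ n)
    (σ : Fin (2*n) → Fin (2*n)) (hσ : ∀ j, σ (σ j) = j) (hσ' : ∀ j, σ j ≠ j)
    (Y : Fin (2*n) → ℝ) (hY0 : ∀ j, 0 ≤ Y j) (hY : StrictAnti Y)
    (L : Finset (Fin (2*n) → Bool))
    (hL : L = Finset.univ.filter (fun ℓ => ∀ j, ℓ (σ j) = !(ℓ j)))
    (p : Fin (2*n) → ℝ)
    (hp : ∀ j, p j = ((L.filter (fun ℓ => ℓ j = true ∧
        (Finset.univ.filter (fun i => i < j ∧ ℓ i = true)).card < k)).card : ℝ) / 2 ^ n) :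
    ∑ j, p j * Y j ≤
      (1/2) * ∑ j ∈ Finset.univ.filter (fun j : Fin (2*n) => (j : ℕ) < 2*k), Y j := by
  obtain rfl : L = pairedLabellings σ := by ext ℓ; simp [hL, pairedLabellings]
  replace hp : ∀ j, p j = #{ℓ ∈ pairedLabellings σ | j ∈ topValues k ℓ} / (2 : ℝ) ^ n := by
    simpa [topValues] using hp
  have hpairs : #{j | j < σ j} = n := by
    have h := two_mul_card_filter_lt_involution hσ hσ'
    rw [Fintype.card_fin] at h
    omega
  have hcard : #(pairedLabellings σ) ≤ 2 ^ n :=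
    (card_pairedLabellings_le hσ hσ').trans_eq (by rw [hpairs])
  have h2n : (0 : ℝ) < 2 ^ n := by positivity
  refine Fin.sum_mul_le_mul_sum_filter_val_lt (by omega) (fun j => by rw [hp]; positivity)
    (fun j => ?_) ?_ hY0 hY.antitone
  · have h := (two_mul_card_filter_mem_topValues_le
      (fun ℓ => not_comp_mem_pairedLabellings) k j).trans hcard
    rw [hp, div_le_iff₀ h2n]
    have : (2 * #{ℓ ∈ pairedLabellings σ | j ∈ topValues k ℓ} : ℝ) ≤ 2 ^ n := by exact_mod_cast h
    linarith
  · have h := (sum_card_filter_mem_topValues_le k (pairedLabellings σ)).trans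
      (Nat.mul_le_mul_right k hcard)
    rw [sum_congr rfl fun j _ => hp j, ← sum_div, div_le_iff₀ h2n]
    have : (∑ j, #{ℓ ∈ pairedLabellings σ | j ∈ topValues k ℓ} : ℝ) ≤ 2 ^ n * k := by
      exact_mod_cast h
    push_cast
    linarith
end

section
/- For a simple symmetric random walk of n i.i.d. ±1 steps, for any integer s >= 1, the probability that RW(n) equals s or s+1 is at most C / sqrt(s) for a universal constant C (e.g. C = 2). In particular, with s = ceil(sqrt(k)), P[max_j RW(j) <= 0 and RW(n) <= -sqrt(k)] = O(1/sqrt(k)) uniformly in n. -/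
/-!
Writing the walk through the set of its `+1` steps, each level set `{RW(n) = v}` is a set of
`n`-step sign patterns with a prescribed number of `+1`s, so it has at most `binom(n, ⌊n/2⌋)`
elements; and `RW(n)` can reach `s` only when `s ≤ n`. It remains to bound the middle binomial
coefficient: `√n · binom(n, ⌊n/2⌋) ≤ 2^n`. This follows from the Wallis-type inequality
`(2m+1) · binom(2m, m)^2 ≤ 16^m`, which is proved by induction using
`binom(2m+2, m+1) / binom(2m, m) = 2(2m+1)/(m+1)` and `(2m+1)(2m+3) ≤ 4(m+1)^2`.
-/

open Finset

namespace Nat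

theorem two_mul_add_one_mul_centralBinom_sq_le (m : ℕ) :
    (2 * m + 1) * centralBinom m ^ 2 ≤ 16 ^ m := by
  induction m with
  | zero => simp
  | succ m ih =>
    suffices (m + 1) ^ 2 * ((2 * (m + 1) + 1) * centralBinom (m + 1) ^ 2) ≤
        (m + 1) ^ 2 * 16 ^ (m + 1) from Nat.le_of_mul_le_mul_left this (by positivity)
    calc (m + 1) ^ 2 * ((2 * (m + 1) + 1) * centralBinom (m + 1) ^ 2)
        = (2 * m + 3) * ((m + 1) * centralBinom (m + 1)) ^ 2 := by ring
      _ = 4 * (2 * m + 1) * (2 * m + 3) * ((2 * m + 1) * centralBinom m ^ 2) := by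
          rw [succ_mul_centralBinom_succ]; ring
      _ ≤ 4 * (2 * m + 1) * (2 * m + 3) * 16 ^ m := Nat.mul_le_mul_left _ ih
      _ ≤ 16 * (m + 1) ^ 2 * 16 ^ m := Nat.mul_le_mul_right _ (by nlinarith)
      _ = (m + 1) ^ 2 * 16 ^ (m + 1) := by ring

theorem mul_choose_half_sq_le (n : ℕ) : n * n.choose (n / 2) ^ 2 ≤ 4 ^ n := by
  rcases Nat.even_or_odd' n with ⟨m, rfl | rfl⟩
  · rw [Nat.mul_div_cancel_left m two_pos, ← centralBinom_eq_two_mul_choose, pow_mul]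
    calc 2 * m * centralBinom m ^ 2 ≤ (2 * m + 1) * centralBinom m ^ 2 :=
          Nat.mul_le_mul_right _ (by omega)
      _ ≤ (4 ^ 2) ^ m := two_mul_add_one_mul_centralBinom_sq_le m
  · have hhalf : (2 * m + 1) / 2 = m := by omega
    have hdouble : centralBinom (m + 1) = 2 * (2 * m + 1).choose m := by
      rw [centralBinom_eq_two_mul_choose, show 2 * (m + 1) = 2 * m + 1 + 1 by ring,
        choose_succ_succ', choose_symm_half]
      ring
    have := two_mul_add_one_mul_centralBinom_sq_le (m + 1)
    rw [hdouble] at this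
    rw [hhalf]
    suffices 4 * ((2 * m + 1) * (2 * m + 1).choose m ^ 2) ≤ 4 * 4 ^ (2 * m + 1) from
      Nat.le_of_mul_le_mul_left this (by norm_num)
    calc 4 * ((2 * m + 1) * (2 * m + 1).choose m ^ 2)
        ≤ (2 * (m + 1) + 1) * (2 * (2 * m + 1).choose m) ^ 2 := by nlinarith
      _ ≤ 16 ^ (m + 1) := this
      _ = 4 * 4 ^ (2 * m + 1) := by
          rw [show (16 : ℕ) = 4 ^ 2 by norm_num, ← pow_mul]; ring

end Nat

theorem sqrt_mul_choose_half_le_two_pow (n : ℕ) :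
    √n * (n.choose (n / 2) : ℝ) ≤ 2 ^ n := by
  have h : ((n * n.choose (n / 2) ^ 2 : ℕ) : ℝ) ≤ ((4 ^ n : ℕ) : ℝ) :=
    Nat.cast_le.mpr (Nat.mul_choose_half_sq_le n)
  refine (pow_le_pow_iff_left₀ (by positivity) (by positivity) two_ne_zero).mp ?_
  rw [mul_pow, Real.sq_sqrt n.cast_nonneg, ← pow_mul, mul_comm n 2, pow_mul]
  push_cast at h
  norm_num [h]

def walkEndpoint {n : ℕ} (ε : Fin n → Bool) : ℤ := ∑ t, if ε t then 1 else -1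

section walkEndpoint

variable {n : ℕ}

theorem walkEndpoint_eq (ε : Fin n → Bool) :
    walkEndpoint ε = 2 * #{t | ε t} - n := by
  have hstep : ∀ t, (if ε t then (1 : ℤ) else -1) = 2 * (if ε t then 1 else 0) - 1 := by
    intro t; split <;> norm_num
  simp only [walkEndpoint, hstep, sum_sub_distrib, ← mul_sum, sum_boole, sum_const, card_univ,
    Fintype.card_fin, nsmul_eq_mul, mul_one]

theorem abs_walkEndpoint_le (ε : Fin n → Bool) : |walkEndpoint ε| ≤ n := by
  have := card_le_univ (univ.filter fun t => ε t)
  rw [Fintype.card_fin] at this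
  rw [walkEndpoint_eq, abs_le]
  omega

theorem card_walkEndpoint_eq_le (v : ℤ) :
    #{ε : Fin n → Bool | walkEndpoint ε = v} ≤ n.choose (n / 2) := by
  have hinj : Function.Injective fun ε : Fin n → Bool => univ.filter fun t => ε t := by
    intro ε ε' h
    funext t
    simpa using congrArg (t ∈ ·) h
  calc #{ε : Fin n → Bool | walkEndpoint ε = v}
      ≤ #(powersetCard ((n + v).toNat / 2) (univ : Finset (Fin n))) := by
        refine card_le_card_of_injOn _ (fun ε hε => ?_) hinj.injOn
        rw [coe_filter, Set.mem_ofPred_eq] at hε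
        have := walkEndpoint_eq ε
        rw [mem_coe, mem_powersetCard]
        refine ⟨subset_univ _, ?_⟩
        omega
    _ = n.choose ((n + v).toNat / 2) := by simp
    _ ≤ n.choose (n / 2) := Nat.choose_le_middle _ n

end walkEndpoint

/-- For a simple symmetric random walk of `n` i.i.d. ±1 steps and any
integer `s ≥ 1`, the probability that the endpoint equals `s` or `s+1` is at most
`2 / sqrt s`, uniformly in `n`. -/
theorem stmt6 (n s : ℕ) (hs : 1 ≤ s) :
    (((Finset.univ : Finset (Fin n → Bool)).filter (fun ε =>
        (∑ t : Fin n, (if ε t then (1:ℤ) else -1)) = (s:ℤ) ∨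
        (∑ t : Fin n, (if ε t then (1:ℤ) else -1)) = (s:ℤ) + 1)).card : ℝ) / 2 ^ n
      ≤ 2 / Real.sqrt s := by
  let A : Finset (Fin n → Bool) := {ε | walkEndpoint ε = s ∨ walkEndpoint ε = s + 1}
  change (#A : ℝ) / 2 ^ n ≤ 2 / √s
  rcases A.eq_empty_or_nonempty with hempty | ⟨ε, hε⟩
  · rw [hempty, card_empty, Nat.cast_zero, zero_div]
    positivity
  have hsn : (s : ℝ) ≤ n := by
    have := abs_le.mp (abs_walkEndpoint_le ε)
    rw [mem_filter] at hε
    exact_mod_cast (by omega : s ≤ n)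
  have hcard : #A ≤ 2 * n.choose (n / 2) := by
    rw [show A = _ from filter_or .., two_mul]
    exact (card_union_le _ _).trans
      (add_le_add (card_walkEndpoint_eq_le _) (card_walkEndpoint_eq_le _))
  have hs_pos : (0 : ℝ) < √s := Real.sqrt_pos.mpr (by exact_mod_cast hs)
  have hn_pos : (0 : ℝ) < √n := hs_pos.trans_le (Real.sqrt_le_sqrt hsn)
  calc (#A : ℝ) / 2 ^ n
      ≤ 2 * n.choose (n / 2) / 2 ^ n := by gcongr; exact_mod_cast hcard
    _ ≤ 2 / √n := by
        rw [div_le_div_iff₀ (by positivity) hn_pos, mul_assoc, mul_comm _ √n]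
        gcongr
        exact sqrt_mul_choose_half_le_two_pow n
    _ ≤ 2 / √s := by gcongr
end

section
/- Decorrelation increases expected height: let RW be a walk of n steps where steps at positions x < y are perfectly negatively correlated ±1 variables (one is +1 iff the other is -1, each marginally uniform), and all other steps are arbitrary but fixed. Replacing the pair (step_x, step_y) by two independent uniform ±1 variables does not decrease the expected maximum of the walk, E[max_{0 <= j <= n} RW(j)]. -/
/-!
Write the walk as a fixed base walk plus `a · [x < j] + b · [y < j]`, so that the height
`H a b` is a maximum of functions affine in `(a, b)` whose two slopes are both monotone
in `j`. Such a maximum is supermodular: `H 1 (-1) + H (-1) 1 ≤ H 1 1 + H (-1) (-1)`,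
because the maximisers of `H 1 (-1)` and `H (-1) 1` can be swapped between the two
terms on the right. The two expectations differ by a quarter of this gap.
-/

open Finset

section MaxAffine

variable {ι α : Type*} [CommRing α] [LinearOrder α] [IsOrderedRing α]

def maxAffine (s : Finset ι) (hs : s.Nonempty) (B u v : ι → α) (a b : α) : α :=
  s.sup' hs fun j => B j + a * u j + b * v j

theorem maxAffine_add_maxAffine_le_of_monovaryOn {s : Finset ι} (hs : s.Nonempty)
    {B u v : ι → α} (huv : MonovaryOn u v s) {a a' b b' : α} (ha : a ≤ a') (hb : b ≤ b') :
    maxAffine s hs B u v a' b + maxAffine s hs B u v a b' ≤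
      maxAffine s hs B u v a' b' + maxAffine s hs B u v a b := by
  have le_max : ∀ c d, ∀ k ∈ s, B k + c * u k + d * v k ≤ maxAffine s hs B u v c d :=
    fun c d k hk => le_sup' (fun j => B j + c * u j + d * v j) hk
  obtain ⟨i, hi, hmax_i⟩ := exists_mem_eq_sup' hs fun j => B j + a' * u j + b * v j
  obtain ⟨j, hj, hmax_j⟩ := exists_mem_eq_sup' hs fun j => B j + a * u j + b' * v j
  rw [maxAffine, hmax_i, maxAffine, hmax_j]
  rcases le_or_gt (v j) (v i) with hv | hv
  · linear_combination le_max a' b' i hi + le_max a b j hj +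
      mul_nonneg (sub_nonneg.2 hb) (sub_nonneg.2 hv)
  · linear_combination le_max a' b' j hj + le_max a b i hi +
      mul_nonneg (sub_nonneg.2 ha) (sub_nonneg.2 (huv hi hj hv))

end MaxAffine

theorem sum_update_update_of_ne {ι M : Type*} [DecidableEq ι] [NonAssocSemiring M] {x y : ι}
    (hxy : x ≠ y) (s : ι → M) (a b : M) (T : Finset ι) :
    ∑ t ∈ T, Function.update (Function.update s x a) y b t =
      ∑ t ∈ T, Function.update (Function.update s x 0) y 0 t +
        a * (if x ∈ T then 1 else 0) + b * (if y ∈ T then 1 else 0) := by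
  have hpt : ∀ t, Function.update (Function.update s x a) y b t =
      Function.update (Function.update s x 0) y 0 t + a * (Pi.single x 1 : ι → M) t +
        b * (Pi.single y 1 : ι → M) t := by
    intro t
    rcases eq_or_ne t y with rfl | hty
    · simp [hxy.symm]
    rcases eq_or_ne t x with rfl | htx
    · simp [hty]
    · simp [hty, htx]
  simp only [hpt, sum_add_distrib, ← mul_sum, sum_pi_single']

theorem stmt8_general (n : ℕ) (x y : Fin n) (hxy : x ≠ y) (s : Fin n → ℤ)
    (H : ℤ → ℤ → ℤ)
    (hH : ∀ a b, H a b = (Finset.range (n+1)).sup' ⟨0, Finset.mem_range.mpr (Nat.succ_pos n)⟩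
      (fun j => ∑ t ∈ Finset.univ.filter (fun t : Fin n => (t : ℕ) < j),
        Function.update (Function.update s x a) y b t)) :
    ((H 1 (-1) + H (-1) 1 : ℤ) : ℝ) / 2 ≤
      ((H 1 1 + H 1 (-1) + H (-1) 1 + H (-1) (-1) : ℤ) : ℝ) / 4 := by
  set before : Fin n → ℕ → ℤ := fun z j => if (z : ℕ) < j then 1 else 0
  have before_mono : ∀ z, Monotone (before z) := fun z j k hjk => by
    simp only [before]; split_ifs <;> omega
  have hH_affine : ∀ a b, H a b = maxAffine (range (n + 1)) nonempty_range_add_one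
      (fun j => ∑ t ∈ univ.filter (fun t : Fin n => (t : ℕ) < j),
        Function.update (Function.update s x 0) y 0 t) (before x) (before y) a b := by
    intro a b
    rw [hH, maxAffine]
    congr 1
    funext j
    rw [sum_update_update_of_ne hxy]
    simp [before]
  have supermodular : H 1 (-1) + H (-1) 1 ≤ H 1 1 + H (-1) (-1) := by
    simp only [hH_affine]
    exact maxAffine_add_maxAffine_le_of_monovaryOn _
      (((before_mono x).monovary (before_mono y)).monovaryOn _) (by norm_num) (by norm_num)
  have : ((H 1 (-1) : ℝ) + H (-1) 1) ≤ H 1 1 + H (-1) (-1) := by exact_mod_cast supermodular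
  push_cast
  linarith

/-- Decorrelation increases the expected height of a walk.  All steps
except those at positions `x ≠ y` are fixed ±1 values given by `s`; `H a b` is the
height (maximum over all partial sums, including the start 0) of the walk whose step
at `x` is `a` and at `y` is `b`.  The expected height when `(step_x, step_y)` is
uniform on `{(+1,-1),(-1,+1)}` (perfectly negatively correlated) is at most the
expected height when `(step_x, step_y)` is uniform on `{±1}²` (independent). -/
theorem stmt8 (n : ℕ) (x y : Fin n) (hxy : x ≠ y) (s : Fin n → ℤ)
    (hs : ∀ t, t ≠ x → t ≠ y → s t = 1 ∨ s t = -1)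
    (H : ℤ → ℤ → ℤ)
    (hH : ∀ a b, H a b = (Finset.range (n+1)).sup' ⟨0, Finset.mem_range.mpr (Nat.succ_pos n)⟩
      (fun j => ∑ t ∈ Finset.univ.filter (fun t : Fin n => (t : ℕ) < j),
        Function.update (Function.update s x a) y b t)) :
    ((H 1 (-1) + H (-1) 1 : ℤ) : ℝ) / 2 ≤
      ((H 1 1 + H 1 (-1) + H (-1) 1 + H (-1) (-1) : ℤ) : ℝ) / 4 :=
  stmt8_general n x y hxy s H hH
end

section
/- In the rehearsal algorithm random-walk model, for any index i, the number of 'values' among Y_1, ..., Y_i that are not selected by the rehearsal algorithm equals max(H^L_i - H^R_i, 0), where H^L_i = max_{j <= i}(RW(j) - RW(i)) and H^R_i = max_{j >= i}(RW(j) - RW(i)). -/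
/-!
Let `M k = max_{k ≤ z ≤ N} RW z`. Going from `k - 1` to `k`, the suffix maximum drops, by exactly
one, precisely when step `k` is a value that is itself a suffix maximum, i.e. an unselected value:
a sample step does not go down, and a value step goes down by one. Hence the number of
unselected values among the first `i` items is `M 0 - M i`, and since
`M 0 = max (max_{z ≤ i} RW z) (M i)` this is `max (H^L_i - H^R_i) 0`.
-/

open Finset

section IntervalMax

variable (f : ℕ → ℤ)

lemma sup'_Icc_eq_max_sup'_Icc_succ {a b : ℕ} (h : a + 1 ≤ b) :
    (Icc a b).sup' (nonempty_Icc.mpr (by omega)) f =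
      max (f a) ((Icc (a + 1) b).sup' (nonempty_Icc.mpr h) f) := by
  simp_rw [← Order.succ_eq_add_one, ← insert_Icc_succ_left_eq_Icc (show a ≤ b by omega)]
  exact sup'_insert ..

lemma sup'_Icc_eq_max_sup'_Icc {a m b : ℕ} (ham : a ≤ m) (hmb : m ≤ b) :
    (Icc a b).sup' (nonempty_Icc.mpr (ham.trans hmb)) f =
      max ((Icc a m).sup' (nonempty_Icc.mpr ham) f) ((Icc m b).sup' (nonempty_Icc.mpr hmb) f) := by
  have hsplit : Icc a b = Icc a m ∪ Icc m b := by
    ext z; simp only [mem_Icc, mem_union]; omega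
  simp_rw [hsplit]
  exact sup'_union ..

end IntervalMax

lemma sup'_sub_const {ι : Type*} (s : Finset ι) (hs : s.Nonempty) (f : ι → ℤ) (c : ℤ) :
    s.sup' hs (fun z => f z - c) = s.sup' hs f - c := by
  simp_rw [sub_eq_add_neg, sup'_add]

/-- For the walk this is `H^R_j = 0`, i.e. a value `Y_j` left unselected. -/
def IsSuffixMax (f : ℕ → ℤ) (N j : ℕ) : Prop := ∀ z ∈ Icc j N, f z ≤ f j

instance (f : ℕ → ℤ) (N : ℕ) : DecidablePred (IsSuffixMax f N) := fun j =>
  inferInstanceAs (Decidable (∀ z ∈ Icc j N, f z ≤ f j))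

lemma isSuffixMax_iff {f : ℕ → ℤ} {N j : ℕ} (hj : j ≤ N) :
    IsSuffixMax f N j ↔ (Icc j N).sup' (nonempty_Icc.mpr hj) f = f j := by
  rw [IsSuffixMax, ← sup'_le_iff (nonempty_Icc.mpr hj)]
  exact ⟨fun h => le_antisymm h (le_sup' f (mem_Icc.mpr ⟨le_rfl, hj⟩)), le_of_eq⟩

section Walk

variable {N : ℕ} {lab : ℕ → Bool} {RW : ℕ → ℤ}
  (hval : ∀ t, 1 ≤ t → t ≤ N → lab t = true → RW t = RW (t - 1) - 1)
  (hsam : ∀ t, 1 ≤ t → t ≤ N → lab t = false → RW (t - 1) ≤ RW t)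
include hval hsam

lemma sup'_Icc_eq_sup'_Icc_succ_add_ite {m : ℕ} (hm : m + 1 ≤ N) :
    (Icc m N).sup' (nonempty_Icc.mpr (by omega)) RW =
      (Icc (m + 1) N).sup' (nonempty_Icc.mpr hm) RW +
        if lab (m + 1) = true ∧ IsSuffixMax RW N (m + 1) then 1 else 0 := by
  rw [sup'_Icc_eq_max_sup'_Icc_succ RW hm]
  have hle := le_sup' RW (mem_Icc.mpr ⟨le_rfl, hm⟩)
  have hmax := isSuffixMax_iff (f := RW) hm
  cases hlab : lab (m + 1)
  · have := hsam (m + 1) (by omega) hm hlab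
    simp only [add_tsub_cancel_right] at this
    simp only [Bool.false_eq_true, false_and, if_false]
    omega
  · have := hval (m + 1) (by omega) hm hlab
    simp only [add_tsub_cancel_right] at this
    split_ifs with hrec
    · have := hmax.mp hrec.2
      omega
    · have := mt hmax.mpr (by simpa using hrec)
      omega

lemma card_filter_isSuffixMax_eq {k : ℕ} (hk : k ≤ N) :
    (((Icc 1 k).filter (fun j => lab j = true ∧ IsSuffixMax RW N j)).card : ℤ) =
      (Icc 0 N).sup' (nonempty_Icc.mpr (Nat.zero_le N)) RW -
        (Icc k N).sup' (nonempty_Icc.mpr hk) RW := by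
  induction k with
  | zero => simp
  | succ m ih =>
    rw [natCast_card_filter, sum_Icc_succ_top (by omega), ← natCast_card_filter, ih (by omega),
      sup'_Icc_eq_sup'_Icc_succ_add_ite hval hsam hk]
    ring

end Walk

theorem stmt9_general (N : ℕ) (lab : ℕ → Bool) (RW : ℕ → ℤ)
    (hval : ∀ t, 1 ≤ t → t ≤ N → lab t = true → RW t = RW (t-1) - 1)
    (hsam : ∀ t, 1 ≤ t → t ≤ N → lab t = false → RW (t-1) ≤ RW t)
    (HR HL : ℕ → ℤ)
    (hHR : ∀ i (hi : i ≤ N),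
      HR i = (Finset.Icc i N).sup' (Finset.nonempty_Icc.mpr hi) (fun z => RW z - RW i))
    (hHL : ∀ i,
      HL i = (Finset.Icc 0 i).sup' (Finset.nonempty_Icc.mpr (Nat.zero_le i)) (fun z => RW z - RW i))
    (i : ℕ) (hi : i ≤ N) :
    (((Finset.Icc 1 i).filter (fun j => lab j = true ∧ HR j = 0)).card : ℤ) =
      max (HL i - HR i) 0 := by
  have hrecord : ∀ j ∈ Icc 1 i,
      (lab j = true ∧ HR j = 0) ↔ (lab j = true ∧ IsSuffixMax RW N j) := by
    intro j hj
    have hjN : j ≤ N := (mem_Icc.mp hj).2.trans hi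
    rw [isSuffixMax_iff hjN, hHR j hjN, sup'_sub_const, sub_eq_zero]
  rw [filter_congr hrecord, card_filter_isSuffixMax_eq hval hsam hi, hHR i hi, hHL i,
    sup'_sub_const, sup'_sub_const, sup'_Icc_eq_max_sup'_Icc RW (Nat.zero_le i) hi]
  omega

/-- Rehearsal-algorithm walk model.  Items `Y_1 > ... > Y_N` are each a
`value` (`lab t = true`, walk steps down by 1) or a `sample` (`lab t = false`, walk
steps up by a nonnegative amount).  With `HR i = max_{i ≤ z ≤ N} (RW z - RW i)` and
`HL i = max_{0 ≤ z ≤ i} (RW z - RW i)`, and the rehearsal algorithm selecting a value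
`Y j` iff `HR j > 0`, the number of values among `Y_1, ..., Y_i` NOT selected equals
`max (HL i - HR i) 0`. -/
theorem stmt9 (N : ℕ) (lab : ℕ → Bool) (RW : ℕ → ℤ)
    (h0 : RW 0 = 0)
    (hval : ∀ t, 1 ≤ t → t ≤ N → lab t = true → RW t = RW (t-1) - 1)
    (hsam : ∀ t, 1 ≤ t → t ≤ N → lab t = false → RW (t-1) ≤ RW t)
    (HR HL : ℕ → ℤ)
    (hHR : ∀ i (hi : i ≤ N),
      HR i = (Finset.Icc i N).sup' (Finset.nonempty_Icc.mpr hi) (fun z => RW z - RW i))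
    (hHL : ∀ i,
      HL i = (Finset.Icc 0 i).sup' (Finset.nonempty_Icc.mpr (Nat.zero_le i)) (fun z => RW z - RW i))
    (i : ℕ) (hi : i ≤ N) :
    (((Finset.Icc 1 i).filter (fun j => lab j = true ∧ HR j = 0)).card : ℤ) =
      max (HL i - HR i) 0 :=
  stmt9_general N lab RW hval hsam HR HL hHR hHL i hi
end

section
/- Let M be a comparison-based mechanism for a downward-closed feasibility constraint J over n bidders whose expected welfare is always at least alpha times the optimum. Fix a relative ordering of bidder values v_1 > v_2 > ... > v_n, let q_j be the probability M selects bidder j, and let J(i) = max over feasible sets S in J of |S ∩ {1,...,i}|. Then for all i, sum_{j <= i} q_j >= alpha * J(i). -/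
theorem antitone_ite_lt {ι κ β : Type*} [Preorder ι] [LinearOrder κ] [Preorder β]
    {f : ι → κ} (hf : Monotone f) (c : κ) {x y : β} (hyx : y ≤ x) :
    Antitone fun j => if f j < c then x else y := by
  intro a b hab
  dsimp only
  split_ifs with hb ha
  · exact le_rfl
  · exact absurd ((hf hab).trans_lt hb) ha
  · exact hyx
  · exact le_rfl

theorem stmt12_general (n : ℕ) (F : Finset (Finset (Fin n))) (hne : F.Nonempty)
    (α : ℝ) (q : Fin n → ℝ)
    (hW : ∀ v : Fin n → ℝ, (∀ j, 0 ≤ v j) → Antitone v →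
      α * (F.sup' hne (fun S => ∑ j ∈ S, v j)) ≤ ∑ j, q j * v j)
    (i : ℕ) :
    α * (F.sup' hne (fun S => ((S.filter (fun j : Fin n => (j : ℕ) < i)).card : ℝ)))
      ≤ ∑ j ∈ Finset.univ.filter (fun j : Fin n => (j : ℕ) < i), q j := by
  have h := hW (fun j => if (j : ℕ) < i then 1 else 0) (fun j => by positivity)
    (antitone_ite_lt Fin.val_strictMono.monotone i zero_le_one)
  simpa only [Finset.sum_boole, mul_boole, ← Finset.sum_filter] using h

/-- Prefix-selection bound for comparison-based mechanisms.  `F` is a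
downward-closed feasibility family over `n` bidders; since the mechanism is
comparison-based and the relative order of the values `v_0 > v_1 > ...` is fixed
(bidder `j` has the `(j+1)`-st largest value), its selection probabilities `q j` are
well defined, and its `α`-approximate welfare guarantee holds for every nonnegative
nonincreasing value vector consistent with that order.  Then for every `i`,
`∑_{j < i} q j ≥ α * J(i)` where `J(i)` is the largest intersection of a feasible set
with the top `i` bidders. -/
theorem stmt12 (n : ℕ) (F : Finset (Finset (Fin n))) (hne : F.Nonempty)
    (hdc : ∀ S ∈ F, ∀ T ⊆ S, T ∈ F)
    (α : ℝ) (hα : 0 ≤ α) (q : Fin n → ℝ) (hq : ∀ j, 0 ≤ q j)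
    (hW : ∀ v : Fin n → ℝ, (∀ j, 0 ≤ v j) → Antitone v →
      α * (F.sup' hne (fun S => ∑ j ∈ S, v j)) ≤ ∑ j, q j * v j)
    (i : ℕ) :
    α * (F.sup' hne (fun S => ((S.filter (fun j : Fin n => (j : ℕ) < i)).card : ℝ)))
      ≤ ∑ j ∈ Finset.univ.filter (fun j : Fin n => (j : ℕ) < i), q j :=
  stmt12_general n F hne α q hW i
end

section
/- Prefix-maximum in matroids: in the free-order secretary analysis, let U be a finite ground set with a matroid M, and let S ⊆ U be a uniformly random subset where each element is included independently with probability 1/2; let P = U \ S. Define the cost C(y, T) of an element y relative to a set T as the weight of the minimum-weight element in the minimal prefix (in decreasing weight order) of T that spans y (or 0 if T does not span y). Then for every element y of the max-weight basis of U: P[y ∈ P and C(y, S) > C(y, P \ {y})] = 1/4. -/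
/-!
Conditioned on `y ∈ P`, the map `S ↦ P \ {y}` is an involution of the subsets of `U \ {y}`
that swaps the two costs being compared. Without ties it therefore matches the samples with
`C(y, S) > C(y, P \ {y})` bijectively with those with `C(y, S) < C(y, P \ {y})`, so exactly half
of the `2 ^ (|U| - 1)` samples avoiding `y` have the first property.
-/

open Classical in
/-- The cost `C(y, T)` of an element `y` relative to a set `T`: order `T` by
decreasing weight as `Z_1, Z_2, ...`, let `i(y)` be minimal with
`y ∈ span {Z_1, ..., Z_{i(y)}}`, and set `C(y,T) = w(Z_{i(y)})` (and `0` if `T` does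
not span `y`).  Equivalently, it is the largest weight `w z` of an element `z ∈ T`
such that the elements of `T` of weight at least `w z` span `y`. -/
noncomputable def sampleCost {α : Type*} [DecidableEq α] [Fintype α]
    (M : Matroid α) (w : α → NNReal) (y : α) (T : Finset α) : NNReal :=
  (T.filter (fun z => y ∈ M.closure {x | x ∈ T ∧ w z ≤ w x})).sup w


open Finset

theorem Finset.two_mul_card_filter_lt_of_involution {ι β : Type*} [LinearOrder β]
    (s : Finset ι) (f : ι → ι) (hf : Set.MapsTo f s s) (hff : ∀ x ∈ s, f (f x) = x)
    (g : ι → β) (hg : ∀ x ∈ s, g x ≠ g (f x)) :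
    2 * #(s.filter fun x => g (f x) < g x) = #s := by
  have hswap : #(s.filter fun x => g (f x) < g x) = #(s.filter fun x => ¬ g (f x) < g x) := by
    refine card_nbij' f f (fun x hx => ?_) (fun x hx => ?_) (fun x hx => ?_) (fun x hx => ?_)
    all_goals simp only [coe_filter, Set.mem_ofPred_eq] at hx ⊢
    · refine ⟨hf hx.1, ?_⟩
      rw [hff x hx.1]
      exact hx.2.not_gt
    · refine ⟨hf hx.1, ?_⟩
      rw [hff x hx.1]
      exact lt_of_le_of_ne (not_lt.mp hx.2) (hg x hx.1)
    · exact hff x hx.1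
    · exact hff x hx.1
  rw [two_mul]
  nth_rewrite 2 [hswap]
  exact card_filter_add_card_filter_not _

section ComplementErase

variable {α : Type*} [DecidableEq α] [Fintype α]

theorem compl_erase_compl_erase {y : α} {S : Finset α} (hy : y ∉ S) :
    (univ \ (univ \ S).erase y).erase y = S := by
  ext a
  by_cases ha : a = y
  · subst ha; simp [hy]
  · simp [ha]

theorem two_mul_card_filter_notMem (y : α) :
    2 * #((univ : Finset (Finset α)).filter fun S => y ∉ S) = 2 ^ Fintype.card α := by
  have h : (univ : Finset (Finset α)).filter (fun S => y ∉ S) = (univ.erase y).powerset := by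
    ext S
    simp [subset_erase]
  rw [h, card_powerset, card_erase_of_mem (mem_univ y), card_univ, ← pow_succ',
    Nat.sub_add_cancel (Fintype.card_pos_iff.mpr ⟨y⟩)]

end ComplementErase

theorem stmt16_general {α : Type*} [DecidableEq α] [Fintype α]
    (M : Matroid α)
    (w : α → NNReal)
    (y : α)
    (hnotie : ∀ S : Finset α, y ∉ S →
      sampleCost M w y S ≠ sampleCost M w y ((Finset.univ \ S).erase y)) :
    ((((Finset.univ : Finset (Finset α)).filter (fun S => y ∉ S ∧
          sampleCost M w y ((Finset.univ \ S).erase y) < sampleCost M w y S)).card : ℝ)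
        / 2 ^ (Fintype.card α)) = 1/4 := by
  have hhalf := two_mul_card_filter_lt_of_involution ((univ : Finset (Finset α)).filter (y ∉ ·))
    (fun S => (univ \ S).erase y) (fun S _ => by simp)
    (fun S hS => compl_erase_compl_erase (mem_filter.mp hS).2) (sampleCost M w y)
    (fun S hS => hnotie S (mem_filter.mp hS).2)
  have hcount := two_mul_card_filter_notMem y
  rw [← hhalf, filter_filter] at hcount
  rw [div_eq_iff (by positivity)]
  have hcount_real := congrArg (Nat.cast : ℕ → ℝ) hcount
  push_cast at hcount_real
  linarith

/-- Free-order secretary prefix-cost symmetry.  `M` is a matroid on the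
whole finite ground set with distinct positive weights `w`, `y` is an element of the
max-weight basis `B` of the ground set, and `S` is a uniformly random subset (each
element independently with probability 1/2), with `P = univ \ S`.  Assuming no ties
between the two costs ever occur, the probability that `y ∈ P` and
`C(y, S) > C(y, P \ {y})` is exactly 1/4. -/
theorem stmt16 {α : Type*} [DecidableEq α] [Fintype α]
    (M : Matroid α) (hE : M.E = Set.univ)
    (w : α → NNReal) (hw : Function.Injective w) (hw0 : ∀ z, 0 < w z)
    (B : Finset α) (hB : M.IsBase ↑B)
    (hmax : ∀ B' : Finset α, M.IsBase ↑B' → ∑ x ∈ B', w x ≤ ∑ x ∈ B, w x)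
    (y : α) (hy : y ∈ B)
    (hnotie : ∀ S : Finset α, y ∉ S →
      sampleCost M w y S ≠ sampleCost M w y ((Finset.univ \ S).erase y)) :
    ((((Finset.univ : Finset (Finset α)).filter (fun S => y ∉ S ∧
          sampleCost M w y ((Finset.univ \ S).erase y) < sampleCost M w y S)).card : ℝ)
        / 2 ^ (Fintype.card α)) = 1/4 :=
  stmt16_general M w y hnotie
end

section
/- Jaillet-Soto-Zenklusen span lemma: let M be a matroid on ground set U with distinct weights, U partitioned into S and P. Order the max-weight basis of S as X_1, ..., X_k by decreasing weight. If y ∈ P is in the max-weight basis of U, and i is minimal with y ∈ span({X_1, ..., X_i}), then w(y) > w(X_i). -/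
/-!
The elements of `Bs` of weight `≥ w x` span `y`, while `Bu \ {y}` does not, so one of them, `z`,
lies outside the closure of `Bu \ {y}`. Exchanging `y` for `z` in `Bu` gives another base, so
maximality of `Bu` forces `w z ≤ w y`. As `z ∈ S` and `y ∉ S`, `z ≠ y`, whence
`w x ≤ w z < w y` by injectivity of `w`.
-/

namespace Matroid

variable {α : Type*} {M : Matroid α}

lemma Indep.exists_mem_notMem_closure_sdiff_singleton {I X : Set α} {y : α} (hI : M.Indep I)
    (hy : y ∈ I) (hyX : y ∈ M.closure X) : ∃ z ∈ X ∩ M.E, z ∉ M.closure (I \ {y}) := by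
  by_contra! h
  rw [← closure_inter_ground] at hyX
  exact hI.notMem_closure_sdiff_of_mem hy (M.closure_subset_closure_of_subset_closure h hyX)

lemma IsBase.exists_weight_le_of_mem_closure {β : Type*} [AddCommMonoid β] [LinearOrder β]
    [IsOrderedCancelAddMonoid β] {w : α → β} {B : Finset α} (hB : M.IsBase B)
    (hmax : ∀ B' : Finset α, M.IsBase B' → ∑ z ∈ B', w z ≤ ∑ z ∈ B, w z)
    {X : Set α} {y : α} (hy : y ∈ B) (hyX : y ∈ M.closure X) : ∃ z ∈ X, w z ≤ w y := by
  classical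
  obtain ⟨z, ⟨hzX, hzE⟩, hz⟩ := hB.indep.exists_mem_notMem_closure_sdiff_singleton
    (Finset.mem_coe.2 hy) hyX
  have hzB : z ∉ B.erase y := fun h ↦ hz (M.mem_closure_of_mem' (by rwa [← Finset.coe_erase]))
  have hexchange : M.IsBase ↑(insert z (B.erase y)) := by
    simpa using hB.exchange_base_of_notMem_closure (Finset.mem_coe.2 hy) hz
  refine ⟨z, hzX, ?_⟩
  have hle := hmax _ hexchange
  rwa [Finset.sum_insert hzB, ← Finset.add_sum_erase B w hy, add_le_add_iff_right] at hle

end Matroid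

theorem stmt17_general {α : Type*}
    (M : Matroid α)
    (w : α → ℝ) (hw : Function.Injective w)
    (S Bs : Finset α) (hBs : M.IsBasis ↑Bs ↑S)
    (Bu : Finset α) (hBu : M.IsBase ↑Bu)
    (hBumax : ∀ B' : Finset α, M.IsBase ↑B' → ∑ z ∈ B', w z ≤ ∑ z ∈ Bu, w z)
    (y : α) (hy : y ∈ Bu) (hyP : y ∉ S)
    (x : α)
    (hspan : y ∈ M.closure ↑(Bs.filter (fun z => w x ≤ w z))) :
    w x < w y := by
  obtain ⟨z, hzA, hzy⟩ := hBu.exists_weight_le_of_mem_closure hBumax hy hspan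
  obtain ⟨hzBs, hxz⟩ := Finset.mem_filter.1 hzA
  have hzS : z ∈ S := hBs.subset hzBs
  have hne : z ≠ y := fun h ↦ hyP (h ▸ hzS)
  exact hxz.trans_lt (hzy.lt_of_ne (hw.ne hne))

/-- Jaillet–Soto–Zenklusen span lemma.  `M` is a matroid on the finite
ground set (all of `α`), weights `w` are distinct and positive, and the ground set is
partitioned into `S` and `P` (so `P = univ \ S`; we only need `y ∉ S`).  `Bs` is the
max-weight basis of `S` and `Bu` a max-weight basis of the whole ground set with
`y ∈ Bu` and `y ∉ S`.  If `x = X_i ∈ Bs` and `i` is minimal with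
`y ∈ span {X_1, ..., X_i}` — i.e. `y` is spanned by the elements of `Bs` of weight
`≥ w x` but not by those of weight `> w x` — then `w y > w x`. -/
theorem stmt17 {α : Type*} [DecidableEq α] [Fintype α]
    (M : Matroid α) (hE : M.E = Set.univ)
    (w : α → ℝ) (hw : Function.Injective w) (hw0 : ∀ z, 0 < w z)
    (S Bs : Finset α) (hBs : M.IsBasis ↑Bs ↑S)
    (hBsmax : ∀ B' : Finset α, M.IsBasis ↑B' ↑S → ∑ z ∈ B', w z ≤ ∑ z ∈ Bs, w z)
    (Bu : Finset α) (hBu : M.IsBase ↑Bu)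
    (hBumax : ∀ B' : Finset α, M.IsBase ↑B' → ∑ z ∈ B', w z ≤ ∑ z ∈ Bu, w z)
    (y : α) (hy : y ∈ Bu) (hyP : y ∉ S)
    (x : α) (hx : x ∈ Bs)
    (hspan : y ∈ M.closure ↑(Bs.filter (fun z => w x ≤ w z)))
    (hmin : y ∉ M.closure ↑(Bs.filter (fun z => w x < w z))) :
    w x < w y :=
  stmt17_general M w hw S Bs hBs Bu hBu hBumax y hy hyP x hspan
end

section
/- Worst-case order for threshold-slot algorithms: consider n items with distinct values and k slots with thresholds T_1 >= T_2 >= ... >= T_k. An algorithm processes items one at a time; when an item with value v arrives, if any unfilled slot has threshold below v, the item fills the unfilled slot with the highest such threshold; otherwise the item is rejected. Then for any fixed values and thresholds, the total value of accepted items is minimized when the items arrive in increasing order of value. -/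
/-! An exchange argument: if `a ≤ b` arrive consecutively, the order `a, b` accepts at most as
much as `b, a`.  If no free slot has threshold below `a`, then `a` is rejected in both orders.  If
the slot `b` would take has threshold at least `a`, the two items take different slots in both
orders.  Otherwise, since thresholds decrease with the index, `a` and `b` have the same eligible
slots, so the first arrival takes the same slot in both orders and the second arrival is accepted
in both or rejected in both; the rejected one is `b` in the order `a, b` and `a` in `b, a`.
Insertion sort reaches the increasing order by such swaps. -/

open Classical in
/-- The threshold-slot algorithm: slots are indexed by `Fin k` with thresholds `T`
(sorted nonincreasingly, so among available slots with threshold below an arriving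
value, the one of smallest index has the highest threshold).  `run T vs S` is the
total value accepted when the items `vs` arrive in order and `S` is the set of
currently unfilled slots: an arriving value `v` fills the available slot with the
highest threshold below `v` (the minimal-index eligible slot), and is rejected if no
such slot exists. -/
noncomputable def runSlots {k : ℕ} (T : Fin k → ℝ) : List ℝ → Finset (Fin k) → ℝ
  | [], _ => 0
  | v :: rest, S =>
    if h : (S.filter (fun s => T s < v)).Nonempty then
      v + runSlots T rest (S.erase ((S.filter (fun s => T s < v)).min' h))
    else runSlots T rest S

theorem Antitone.filter_lt_eq_of_lt_min' {ι α : Type*} [LinearOrder ι] [LinearOrder α]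
    {T : ι → α} (hT : Antitone T) {S : Finset ι} {a b : α} (hab : a ≤ b)
    (h : (S.filter (T · < b)).Nonempty) (hlt : T ((S.filter (T · < b)).min' h) < a) :
    S.filter (T · < a) = S.filter (T · < b) := by
  ext s
  simp only [Finset.mem_filter]
  refine ⟨fun ⟨hs, hsa⟩ => ⟨hs, hsa.trans_le hab⟩, fun ⟨hs, hsb⟩ => ⟨hs, ?_⟩⟩
  exact (hT (Finset.min'_le _ s (Finset.mem_filter.2 ⟨hs, hsb⟩))).trans_lt hlt

namespace runSlots

variable {k : ℕ} (T : Fin k → ℝ) {a b v : ℝ} {r xs ys : List ℝ} {S : Finset (Fin k)}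

theorem cons_of_isLeast {s : Fin k} (hs : IsLeast ↑(S.filter (T · < v)) s) :
    runSlots T (v :: r) S = v + runSlots T r (S.erase s) := by
  have h : (S.filter (T · < v)).Nonempty := ⟨s, hs.1⟩
  rw [runSlots, dif_pos h, (Finset.isLeast_min' _ h).unique hs]

theorem cons_of_not_nonempty (h : ¬(S.filter (T · < v)).Nonempty) :
    runSlots T (v :: r) S = runSlots T r S := by
  rw [runSlots, dif_neg h]

theorem cons_of_not_nonempty_of_subset {S' : Finset (Fin k)}
    (h : ¬(S.filter (T · < v)).Nonempty) (hS : S' ⊆ S) :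
    runSlots T (v :: r) S' = runSlots T r S' :=
  cons_of_not_nonempty T fun h' => h (h'.mono (Finset.filter_subset_filter _ hS))

theorem cons_le_cons (h : ∀ S, runSlots T xs S ≤ runSlots T ys S) (v : ℝ)
    (S : Finset (Fin k)) :
    runSlots T (v :: xs) S ≤ runSlots T (v :: ys) S := by
  by_cases hv : (S.filter (T · < v)).Nonempty
  · rw [cons_of_isLeast T (Finset.isLeast_min' _ hv), cons_of_isLeast T (Finset.isLeast_min' _ hv)]
    exact add_le_add_right (h _) v
  · rw [cons_of_not_nonempty T hv, cons_of_not_nonempty T hv]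
    exact h S

theorem swap_of_not_nonempty (hA : ¬(S.filter (T · < a)).Nonempty) :
    runSlots T (a :: b :: r) S = runSlots T (b :: a :: r) S := by
  rw [cons_of_not_nonempty T hA]
  by_cases hB : (S.filter (T · < b)).Nonempty
  · have hsb := Finset.isLeast_min' _ hB
    rw [cons_of_isLeast T hsb, cons_of_isLeast T hsb,
      cons_of_not_nonempty_of_subset T hA (S.erase_subset _)]
  · rw [cons_of_not_nonempty T hB, cons_of_not_nonempty T hB, cons_of_not_nonempty T hA]

theorem swap_of_isLeast {sa sb : Fin k} (hsa : IsLeast ↑(S.filter (T · < a)) sa)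
    (hsb : IsLeast ↑(S.filter (T · < b)) sb) (hb : a ≤ T sb) :
    runSlots T (a :: b :: r) S = runSlots T (b :: a :: r) S := by
  have hsb_not_mem : sb ∉ S.filter (T · < a) := fun h => (Finset.mem_filter.1 h).2.not_ge hb
  have hne : sb ≠ sa := fun h => hsb_not_mem (h ▸ hsa.1)
  have hsb' : IsLeast ↑((S.erase sa).filter (T · < b)) sb := by
    refine ⟨?_, fun t ht => hsb.2 ?_⟩
    · rw [Finset.filter_erase]; exact Finset.mem_erase.2 ⟨hne, hsb.1⟩
    · rw [Finset.filter_erase] at ht; exact Finset.mem_of_mem_erase ht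
  have hsa' : IsLeast ↑((S.erase sb).filter (T · < a)) sa := by
    rwa [Finset.filter_erase, Finset.erase_eq_of_notMem hsb_not_mem]
  rw [cons_of_isLeast T hsa, cons_of_isLeast T hsb', cons_of_isLeast T hsb,
    cons_of_isLeast T hsa', Finset.erase_right_comm]
  ring

theorem swap_le_of_filter_eq (hab : a ≤ b) (h : S.filter (T · < a) = S.filter (T · < b)) :
    runSlots T (a :: b :: r) S ≤ runSlots T (b :: a :: r) S := by
  by_cases hA : (S.filter (T · < a)).Nonempty
  · obtain ⟨s, hs⟩ : ∃ s, IsLeast (S.filter (T · < a) : Set (Fin k)) s :=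
      ⟨_, Finset.isLeast_min' _ hA⟩
    have hsb : IsLeast (S.filter (T · < b) : Set (Fin k)) s := h ▸ hs
    rw [cons_of_isLeast T hs, cons_of_isLeast T hsb]
    have h' : (S.erase s).filter (T · < a) = (S.erase s).filter (T · < b) := by
      rw [Finset.filter_erase, Finset.filter_erase, h]
    by_cases hA' : ((S.erase s).filter (T · < a)).Nonempty
    · obtain ⟨s', hs'⟩ : ∃ s', IsLeast ((S.erase s).filter (T · < a) : Set (Fin k)) s' :=
        ⟨_, Finset.isLeast_min' _ hA'⟩
      have hsb' : IsLeast ((S.erase s).filter (T · < b) : Set (Fin k)) s' := h' ▸ hs'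
      rw [cons_of_isLeast T hs', cons_of_isLeast T hsb']
      linarith
    · rw [cons_of_not_nonempty T hA', cons_of_not_nonempty T (h' ▸ hA')]
      linarith
  · exact (swap_of_not_nonempty T hA).le

variable {T}

theorem swap_le (hT : Antitone T) (hab : a ≤ b) (r : List ℝ) (S : Finset (Fin k)) :
    runSlots T (a :: b :: r) S ≤ runSlots T (b :: a :: r) S := by
  by_cases hA : (S.filter (T · < a)).Nonempty
  · have hB : (S.filter (T · < b)).Nonempty :=
      hA.mono (Finset.monotone_filter_right S fun _ _ h => h.trans_le hab)
    by_cases hmin : T ((S.filter (T · < b)).min' hB) < a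
    · exact swap_le_of_filter_eq T hab (hT.filter_lt_eq_of_lt_min' hab hB hmin)
    · exact (swap_of_isLeast T (Finset.isLeast_min' _ hA) (Finset.isLeast_min' _ hB)
        (not_lt.1 hmin)).le
  · exact (swap_of_not_nonempty T hA).le

theorem orderedInsert_le (hT : Antitone T) (a : ℝ) (l : List ℝ) (S : Finset (Fin k)) :
    runSlots T (l.orderedInsert (· ≤ ·) a) S ≤ runSlots T (a :: l) S := by
  induction l generalizing S with
  | nil => rfl
  | cons b l ih =>
    by_cases hab : a ≤ b
    · simp only [List.orderedInsert, if_pos hab, le_refl]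
    · rw [List.orderedInsert, if_neg hab]
      calc runSlots T (b :: l.orderedInsert (· ≤ ·) a) S
          ≤ runSlots T (b :: a :: l) S := cons_le_cons T ih b S
        _ ≤ runSlots T (a :: b :: l) S := swap_le hT (le_of_not_ge hab) l S

theorem insertionSort_le (hT : Antitone T) (l : List ℝ) (S : Finset (Fin k)) :
    runSlots T (l.insertionSort (· ≤ ·)) S ≤ runSlots T l S := by
  induction l generalizing S with
  | nil => rfl
  | cons a l ih =>
    calc runSlots T ((l.insertionSort (· ≤ ·)).orderedInsert (· ≤ ·) a) S
        ≤ runSlots T (a :: l.insertionSort (· ≤ ·)) S := orderedInsert_le hT a _ S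
      _ ≤ runSlots T (a :: l) S := cons_le_cons T ih a S

end runSlots

theorem stmt18_general (k : ℕ) (T : Fin k → ℝ) (hT : Antitone T)
    (l₁ l₂ : List ℝ) (hperm : l₁.Perm l₂)
    (hsort : l₁.Pairwise (· ≤ ·)) :
    runSlots T l₁ Finset.univ ≤ runSlots T l₂ Finset.univ := by
  have hl₁ : l₁ = l₂.insertionSort (· ≤ ·) :=
    (hperm.trans (List.perm_insertionSort _ l₂).symm).eq_of_pairwise' hsort
      (List.pairwise_insertionSort _ l₂)
  rw [hl₁]
  exact runSlots.insertionSort_le hT l₂ _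

/-- Worst-case order for threshold-slot algorithms: for distinct
positive values and nonincreasing thresholds, the total accepted value over any
arrival order `l₂` is at least the total accepted value when the items arrive in
increasing order of value (`l₁`). -/
theorem stmt18 (k : ℕ) (T : Fin k → ℝ) (hT : Antitone T)
    (l₁ l₂ : List ℝ) (hperm : l₁.Perm l₂)
    (hsort : l₁.Pairwise (· ≤ ·)) (hnodup : l₁.Nodup)
    (hpos : ∀ v ∈ l₁, 0 < v) :
    runSlots T l₁ Finset.univ ≤ runSlots T l₂ Finset.univ :=
  stmt18_general k T hT l₁ l₂ hperm hsort
end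

section
/- Concentration of sample count: among the first T = 2k - 4*sqrt(k) - 2*k^{2/3} items of a sequence of paired coin flips (where within each pair exactly one flip is 'sample', and flips from different pairs are independent), the probability that there are at least k - 2*sqrt(k) 'samples' among the first T items is at most 2 * exp(-k^{1/3}/4). -/
/-!
Items before `T` whose partner also lies before `T` are, pair by pair, exactly half samples; so
reaching `k - 2√k` samples forces the `m ≤ T ≤ 2k` items whose partner lies after `T` to
contain at least `m/2 + k^{2/3}` samples. Completing these items to a transversal of the pairing
shows that their labels are uniform over all `2^m` patterns, and Hoeffding's bound for `m` fair
coins, proved by exponential Markov on subsets, gives the probability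
`exp (-2 k^{4/3} / (2k)) = exp (-k^{1/3})`.
-/

open Finset Real

namespace Real

lemma exp_add_one_le_two_mul_exp (x : ℝ) : exp x + 1 ≤ 2 * exp (x / 2 + x ^ 2 / 8) := by
  have hcosh : exp x + 1 = 2 * exp (x / 2) * cosh (x / 2) := by
    have h1 : exp x = exp (x / 2) * exp (x / 2) := by rw [← exp_add]; ring_nf
    have h2 : (1 : ℝ) = exp (x / 2) * exp (-(x / 2)) := by rw [← exp_add]; simp
    rw [cosh_eq]
    linear_combination h1 + h2
  calc exp x + 1 = 2 * exp (x / 2) * cosh (x / 2) := hcosh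
    _ ≤ 2 * exp (x / 2) * exp ((x / 2) ^ 2 / 2) := by gcongr; exact cosh_le_exp_half_sq _
    _ = 2 * exp (x / 2 + x ^ 2 / 8) := by rw [mul_assoc, ← exp_add]; ring_nf

lemma rpow_two_thirds_sq_div {x : ℝ} (hx : 0 ≤ x) :
    (x ^ ((2 : ℝ) / 3)) ^ 2 / x = x ^ ((1 : ℝ) / 3) := by
  rcases hx.eq_or_lt with rfl | hx
  · simp
  rw [← rpow_natCast, ← rpow_mul hx.le, ← rpow_sub_one hx.ne']
  norm_num

end Real

namespace Finset

lemma sum_powerset_exp_mul_card {α : Type*} (S : Finset α) (x : ℝ) :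
    ∑ A ∈ S.powerset, exp (x * #A) = (exp x + 1) ^ #S := by
  rw [← sum_pow_mul_eq_add_pow]
  refine sum_congr rfl fun A _ => ?_
  rw [one_pow, mul_one, mul_comm, exp_nat_mul]

theorem card_powerset_filter_div_two_pow_le {α : Type*} [DecidableEq α] (S : Finset α)
    {t M : ℝ} (ht : 0 ≤ t) (hM : (#S : ℝ) ≤ M) :
    (#{A ∈ S.powerset | (#S : ℝ) / 2 + t ≤ #A} : ℝ) / 2 ^ #S ≤ exp (-2 * t ^ 2 / M) := by
  have hM0 : 0 ≤ M := (Nat.cast_nonneg _).trans hM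
  -- the exponential tilt minimising `M x ^ 2 / 8 - x t`
  set x := 4 * t / M
  have hx : 0 ≤ x := by positivity
  have markov : (#{A ∈ S.powerset | (#S : ℝ) / 2 + t ≤ #A} : ℝ) * exp (x * (#S / 2 + t))
      ≤ ∑ A ∈ S.powerset, exp (x * #A) := by
    rw [← nsmul_eq_mul]
    refine (card_nsmul_le_sum _ _ _ fun A hA => ?_).trans
      (sum_le_sum_of_subset_of_nonneg (filter_subset _ _) fun _ _ _ => (exp_pos _).le)
    gcongr
    exact (mem_filter.1 hA).2
  have hexponent : #S * (x / 2 + x ^ 2 / 8) - x * (#S / 2 + t) ≤ -2 * t ^ 2 / M := by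
    rcases hM0.eq_or_lt with rfl | hM0
    · simp [x]
    have hrw : #S * (x / 2 + x ^ 2 / 8) - x * (#S / 2 + t)
        = 2 * t ^ 2 / M * (#S / M) - 4 * t ^ 2 / M := by
      simp only [x]; field_simp; ring
    have hratio : (#S : ℝ) / M ≤ 1 := (div_le_one hM0).2 hM
    rw [hrw, show -2 * t ^ 2 / M = 2 * t ^ 2 / M * 1 - 4 * t ^ 2 / M by ring]
    gcongr
  rw [div_le_iff₀' (by positivity)]
  calc (#{A ∈ S.powerset | (#S : ℝ) / 2 + t ≤ #A} : ℝ)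
      ≤ (exp x + 1) ^ #S * exp (-(x * (#S / 2 + t))) := by
        rw [exp_neg, ← div_eq_mul_inv, le_div_iff₀ (exp_pos _), ← sum_powerset_exp_mul_card]
        exact markov
    _ ≤ (2 * exp (x / 2 + x ^ 2 / 8)) ^ #S * exp (-(x * (#S / 2 + t))) := by
        gcongr; exact exp_add_one_le_two_mul_exp x
    _ = 2 ^ #S * exp (#S * (x / 2 + x ^ 2 / 8) - x * (#S / 2 + t)) := by
        rw [mul_pow, ← exp_nat_mul, mul_assoc, ← exp_add, sub_eq_add_neg]
    _ ≤ 2 ^ #S * exp (-2 * t ^ 2 / M) := by gcongr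

end Finset

namespace Function.Involutive

variable {ι : Type*} {σ : ι → ι}

theorem card_eq_two_mul_card_of_transversal [Fintype ι] [DecidableEq ι] (hσ : Involutive σ)
    {R : Finset ι} (hR : ∀ j, j ∈ R ↔ σ j ∉ R) : Fintype.card ι = 2 * #R := by
  have hcompl : Rᶜ = R.image σ := by
    ext j
    rw [mem_compl, mem_image]
    refine ⟨fun hj => ⟨σ j, (hR (σ j)).2 (by rwa [hσ]), hσ j⟩, ?_⟩
    rintro ⟨r, hr, rfl⟩
    exact (hR r).1 hr
  rw [← card_add_card_compl R, hcompl, card_image_of_injective _ hσ.injective, two_mul]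

theorem exists_transversal_superset [Fintype ι] [LinearOrder ι] (hσ : Involutive σ)
    (hfix : ∀ j, σ j ≠ j) {C : Finset ι} (hC : ∀ j ∈ C, σ j ∉ C) :
    ∃ R, C ⊆ R ∧ ∀ j, j ∈ R ↔ σ j ∉ R := by
  refine ⟨C ∪ ({j | j ∉ C ∧ σ j ∉ C ∧ j < σ j} : Finset ι), subset_union_left, fun j => ?_⟩
  have hj := hC j
  have hσj := hC (σ j)
  rw [hσ j] at hσj
  simp only [mem_union, mem_filter, mem_univ, true_and, hσ j]
  rcases (hfix j).lt_or_gt with h | h <;> have := h.not_gt <;> tauto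

theorem eq_of_forall_mem_transversal {R : Finset ι} (hσ : Involutive σ)
    (hR : ∀ j, j ∈ R ↔ σ j ∉ R) {ℓ ℓ' : ι → Bool} (hℓ : ∀ j, ℓ (σ j) = !ℓ j)
    (hℓ' : ∀ j, ℓ' (σ j) = !ℓ' j) (h : ∀ j ∈ R, ℓ j = ℓ' j) : ℓ = ℓ' := by
  funext j
  by_cases hj : j ∈ R
  · exact h j hj
  · have hσj : σ j ∈ R := by rwa [hR, hσ]
    rw [← hσ j, hℓ, hℓ', h _ hσj]

theorem card_filter_mem_le_of_transversal [DecidableEq ι] {R C : Finset ι} (hσ : Involutive σ)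
    (hR : ∀ j, j ∈ R ↔ σ j ∉ R) (hCR : C ⊆ R) (L : Finset (ι → Bool))
    (hL : ∀ ℓ ∈ L, ∀ j, ℓ (σ j) = !ℓ j) (𝒜 : Finset (Finset ι)) :
    #{ℓ ∈ L | {j ∈ C | ℓ j} ∈ 𝒜} ≤ #𝒜 * 2 ^ (#R - #C) := by
  calc #{ℓ ∈ L | {j ∈ C | ℓ j} ∈ 𝒜}
      ≤ #(𝒜 ×ˢ (univ : Finset (↥(R \ C) → Bool))) := by
        refine card_le_card_of_injOn (fun ℓ => ({j ∈ C | ℓ j}, fun r => ℓ r)) ?_ ?_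
        · intro ℓ hℓ
          simp only [coe_filter, Set.mem_ofPred_eq] at hℓ
          simp [hℓ.2]
        · intro ℓ hℓ ℓ' hℓ' heq
          simp only [coe_filter, Set.mem_ofPred_eq] at hℓ hℓ'
          obtain ⟨hCeq, hRC⟩ := Prod.mk.inj heq
          rw [filter_inj'] at hCeq
          refine eq_of_forall_mem_transversal hσ hR (hL ℓ hℓ.1) (hL ℓ' hℓ'.1) fun j hj => ?_
          by_cases hjC : j ∈ C
          · exact Bool.eq_iff_iff.2 (hCeq hjC)
          · exact congrFun hRC ⟨j, mem_sdiff.2 ⟨hj, hjC⟩⟩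
    _ = #𝒜 * 2 ^ (#R - #C) := by
        rw [card_product, card_univ, Fintype.card_fun, Fintype.card_coe,
          card_sdiff_of_subset hCR, Fintype.card_bool]

theorem two_mul_card_filter_eq_card {B : Finset ι} (hσ : Involutive σ)
    (hB : ∀ j ∈ B, σ j ∈ B) {ℓ : ι → Bool} (hℓ : ∀ j, ℓ (σ j) = !ℓ j) :
    2 * #{j ∈ B | ℓ j} = #B := by
  have hswap : #{j ∈ B | ℓ j} = #{j ∈ B | ¬ ℓ j} := by
    refine card_nbij' σ σ ?_ ?_ (fun j _ => hσ j) (fun j _ => hσ j)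
    · intro j hj
      simp only [coe_filter, Set.mem_ofPred_eq] at hj ⊢
      simp [hB j hj.1, hℓ, hj.2]
    · intro j hj
      simp only [coe_filter, Set.mem_ofPred_eq] at hj ⊢
      simp [hB j hj.1, hℓ, hj.2]
  rw [two_mul]
  nth_rw 2 [hswap]
  exact card_filter_add_card_filter_not _

theorem card_filter_sub_half_card_eq [DecidableEq ι] (hσ : Involutive σ) (F : Finset ι)
    {ℓ : ι → Bool} (hℓ : ∀ j, ℓ (σ j) = !ℓ j) :
    (#{j ∈ F | ℓ j} : ℝ) - #F / 2
      = #{j ∈ {j ∈ F | σ j ∉ F} | ℓ j} - #{j ∈ F | σ j ∉ F} / 2 := by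
  have hpaired := hσ.two_mul_card_filter_eq_card (B := {j ∈ F | σ j ∈ F})
    (fun j hj => by simp only [mem_filter, hσ j] at hj ⊢; exact hj.symm) hℓ
  have hF := card_filter_add_card_filter_not (s := F) (p := fun j => σ j ∈ F)
  have hFℓ :=
    card_filter_add_card_filter_not (s := {j ∈ F | ℓ j}) (p := fun j => σ j ∈ F)
  simp only [filter_filter, and_comm (a := ℓ _ = true)] at hpaired hFℓ ⊢
  rw [← hF, ← hFℓ, ← hpaired]
  push_cast
  ring

theorem card_filter_mem_div_two_pow_le [Fintype ι] [LinearOrder ι] (hσ : Involutive σ)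
    (hfix : ∀ j, σ j ≠ j) {n : ℕ} (hn : Fintype.card ι = 2 * n) {C : Finset ι}
    (hC : ∀ j ∈ C, σ j ∉ C) (L : Finset (ι → Bool)) (hL : ∀ ℓ ∈ L, ∀ j, ℓ (σ j) = !ℓ j)
    (𝒜 : Finset (Finset ι)) :
    (#{ℓ ∈ L | {j ∈ C | ℓ j} ∈ 𝒜} : ℝ) / 2 ^ n ≤ #𝒜 / 2 ^ #C := by
  obtain ⟨R, hCR, hR⟩ := hσ.exists_transversal_superset hfix hC
  have hRn : #R = n := by have := hσ.card_eq_two_mul_card_of_transversal hR; omega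
  have hCn : #C ≤ n := hRn ▸ card_le_card hCR
  have hcount := hσ.card_filter_mem_le_of_transversal hR hCR L hL 𝒜
  rw [hRn] at hcount
  rw [div_le_div_iff₀ (by positivity) (by positivity)]
  calc (#{ℓ ∈ L | {j ∈ C | ℓ j} ∈ 𝒜} : ℝ) * 2 ^ #C
      ≤ #𝒜 * 2 ^ (n - #C) * 2 ^ #C := by
        gcongr; exact_mod_cast hcount
    _ = #𝒜 * 2 ^ n := by rw [mul_assoc, ← pow_add, Nat.sub_add_cancel hCn]

end Function.Involutive

open Classical in
/-- Concentration of the sample count.  There are `2n` items forming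
`n` pairs via the fixed-point-free involution `σ`; a uniformly random labelling `ℓ`
(uniform over the set `L` of labellings assigning exactly one `sample` per pair,
where `ℓ j = true` means item `j` is a `sample`) is drawn, so `|L| = 2^n`.  If
`T ≤ 2k - 4√k - 2k^{2/3}`, the probability that at least `k - 2√k` of the first `T`
items are samples is at most `2 * exp(-k^{1/3}/4)`. -/
theorem stmt19 (n k T : ℕ)
    (hT : (T : ℝ) ≤ 2*k - 4*Real.sqrt k - 2*(k:ℝ) ^ ((2:ℝ)/3))
    (σ : Fin (2*n) → Fin (2*n)) (hσ : ∀ j, σ (σ j) = j) (hσ' : ∀ j, σ j ≠ j)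
    (L : Finset (Fin (2*n) → Bool))
    (hL : L = Finset.univ.filter (fun ℓ => ∀ j, ℓ (σ j) = !(ℓ j))) :
    ((L.filter (fun ℓ => (k:ℝ) - 2*Real.sqrt k ≤
        ((Finset.univ.filter (fun j : Fin (2*n) => (j:ℕ) < T ∧ ℓ j = true)).card : ℝ))).card : ℝ)
      / 2 ^ n ≤ 2 * Real.exp (-(k:ℝ) ^ ((1:ℝ)/3) / 4) := by
  have hinv : Function.Involutive σ := hσ
  set t : ℝ := (k : ℝ) ^ ((2 : ℝ) / 3)
  have ht : 0 ≤ t := rpow_nonneg (Nat.cast_nonneg k) _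
  set F : Finset (Fin (2 * n)) := {j | (j : ℕ) < T}
  set C := {j ∈ F | σ j ∉ F}
  set 𝒜 := {A ∈ C.powerset | (#C : ℝ) / 2 + t ≤ #A}
  have hLσ : ∀ ℓ ∈ L, ∀ j, ℓ (σ j) = !ℓ j := fun ℓ hℓ => by
    rw [hL] at hℓ; exact (mem_filter.1 hℓ).2
  have hFT : (#F : ℝ) ≤ T := by
    rw [Fin.card_filter_val_lt]; exact_mod_cast min_le_right _ _
  have hCF : (#C : ℝ) ≤ #F := by exact_mod_cast card_filter_le _ _
  have hs : 0 ≤ (k : ℝ) ^ ((1 : ℝ) / 3) := rpow_nonneg (Nat.cast_nonneg k) _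
  have hC : ∀ j ∈ C, σ j ∉ C := fun j hj hσj =>
    ((mem_filter.1 hj).2 : σ j ∉ F) (mem_filter.1 hσj).1
  calc _ ≤ (#{ℓ ∈ L | {j ∈ C | ℓ j} ∈ 𝒜} : ℝ) / 2 ^ n := by
        gcongr with ℓ hℓ
        intro hbad
        have hexcess := hinv.card_filter_sub_half_card_eq F (hLσ ℓ hℓ)
        rw [filter_filter] at hexcess
        exact mem_filter.2 ⟨mem_powerset.2 (filter_subset _ _), by linarith⟩
    _ ≤ #𝒜 / 2 ^ #C :=
        hinv.card_filter_mem_div_two_pow_le hσ' (Fintype.card_fin _) hC L hLσ 𝒜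
    _ ≤ exp (-2 * t ^ 2 / (2 * k)) :=
        card_powerset_filter_div_two_pow_le C ht (by linarith [Real.sqrt_nonneg k])
    _ = exp (-(k : ℝ) ^ ((1 : ℝ) / 3)) := by
        rw [neg_mul, neg_div, mul_div_mul_left _ _ two_ne_zero,
          rpow_two_thirds_sq_div (Nat.cast_nonneg k)]
    _ ≤ exp (-(k : ℝ) ^ ((1 : ℝ) / 3) / 4) := exp_le_exp.2 (by linarith)
    _ ≤ 2 * exp (-(k : ℝ) ^ ((1 : ℝ) / 3) / 4) :=
        le_mul_of_one_le_left (exp_pos _).le one_le_two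
end
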